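/- Let α ∈ (0, 1/2) and let Ω₁ < Ω₂ < ⋯ < Ω_N be strictly ordered natural frequencies. Let Θ̄ = (θ̄₁, …, θ̄_N) ∈ ℝ^N be an equilibrium of the singular weighted Kuramoto system, i.e. Ω_i + (K/N) ∑_{j≠i} h(θ̄_j − θ̄_i) = 0 for every i, such that max_{i,j} |θ̄_i − θ̄_j| < θ̃, where θ̃ is the unique solution in (0, π/2) of θ̃ = 2α·tan θ̃. Then the equilibrium phases are pairwise distinct and are strictly ordered: θ̄₁ < θ̄₂ < ⋯ < θ̄_N. -/

import Mathlib

open Real Set Filter Topology MeasureTheory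

/-- The orthodromic distance of `θ` to `0` on the circle: `|θ̄|` where
`θ̄ ≡ θ (mod 2π)`, `θ̄ ∈ (−π, π]`. -/
noncomputable def orthoDist (θ : ℝ) : ℝ := |θ - 2 * Real.pi * (round (θ / (2 * Real.pi)) : ℝ)|

/-- The singular interaction kernel `h(θ) = sin θ / |θ|_o^{2α}` (equal to `0` on `2πℤ`,
by the junk value convention `x / 0 = 0`). -/
noncomputable def hker (α θ : ℝ) : ℝ := Real.sin θ / orthoDist θ ^ (2 * α)

lemma orthoDist_eq {θ : ℝ} (h : |θ| < Real.pi) : orthoDist θ = |θ| := by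
  have hπ : (0:ℝ) < 2 * Real.pi := by positivity
  have : round (θ / (2 * Real.pi)) = 0 := by
    rw [round_eq_zero_iff]
    constructor
    · rw [neg_div' , div_le_div_iff₀ (by norm_num) hπ] <;> nlinarith [abs_lt.1 h]
    · rw [div_lt_div_iff₀ hπ (by norm_num : (0:ℝ) < 2)] <;> nlinarith [abs_lt.1 h]
  simp [orthoDist, this]

lemma hker_zero (α : ℝ) : hker α 0 = 0 := by simp [hker]

lemma hker_eq {θ : ℝ} (α : ℝ) (h : |θ| < Real.pi) :
    hker α θ = Real.sin θ / |θ| ^ (2 * α) := by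
  rw [hker, orthoDist_eq h]

lemma stepA {α θt : ℝ} (hα : α ∈ Ioo (0:ℝ) (1/2)) (hθt : θt ∈ Ioo (0:ℝ) (Real.pi/2))
    (hθteq : θt = 2 * α * Real.tan θt) :
    ∀ θ ∈ Icc (0:ℝ) θt, 2 * α * Real.sin θ ≤ θ * Real.cos θ := by
  set F : ℝ → ℝ := fun θ => θ * Real.cos θ - 2 * α * Real.sin θ with hF
  have hd1 : ∀ x : ℝ, HasDerivAt F (Real.cos x - x * Real.sin x - 2 * α * Real.cos x) x := by
    intro x
    have h1 : HasDerivAt (fun θ : ℝ => θ * Real.cos θ) (1 * Real.cos x + x * (-Real.sin x)) x :=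
      (hasDerivAt_id x).mul (Real.hasDerivAt_cos x)
    have h2 : HasDerivAt (fun θ : ℝ => 2 * α * Real.sin θ) (2 * α * Real.cos x) x :=
      (Real.hasDerivAt_sin x).const_mul (2 * α)
    exact (h1.sub h2).congr_deriv (by ring)
  have hd2 : ∀ x : ℝ, HasDerivAt (fun x => Real.cos x - x * Real.sin x - 2 * α * Real.cos x)
      ((2 * α - 2) * Real.sin x - x * Real.cos x) x := by
    intro x
    have h1 : HasDerivAt (fun θ : ℝ => θ * Real.sin θ) (1 * Real.sin x + x * Real.cos x) x :=
      (hasDerivAt_id x).mul (Real.hasDerivAt_sin x)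
    have h2 : HasDerivAt (fun θ : ℝ => 2 * α * Real.cos θ) (2 * α * (-Real.sin x)) x :=
      (Real.hasDerivAt_cos x).const_mul (2 * α)
    exact (((Real.hasDerivAt_cos x).sub h1).sub h2).congr_deriv (by ring)
  have hconc : ConcaveOn ℝ (Icc (0:ℝ) θt) F := by
    apply concaveOn_of_hasDerivWithinAt2_nonpos (f' := fun x => Real.cos x - x * Real.sin x - 2 * α * Real.cos x)
      (f'' := fun x => (2 * α - 2) * Real.sin x - x * Real.cos x) (convex_Icc _ _)
    · exact Continuous.continuousOn (by fun_prop)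
    · exact fun x _ => (hd1 x).hasDerivWithinAt
    · exact fun x _ => (hd2 x).hasDerivWithinAt
    · intro x hx
      rw [interior_Icc] at hx
      have hx0 : 0 < x := hx.1
      have hxπ : x < Real.pi / 2 := hx.2.trans hθt.2
      have hs : 0 ≤ Real.sin x := Real.sin_nonneg_of_nonneg_of_le_pi hx0.le
        (by linarith [Real.pi_pos])
      have hc : 0 < Real.cos x := Real.cos_pos_of_mem_Ioo ⟨by linarith [Real.pi_pos], hxπ⟩
      nlinarith [hα.2]
  have hF0 : F 0 = 0 := by simp [hF]
  have hFt : F θt = 0 := by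
    have hc : 0 < Real.cos θt := Real.cos_pos_of_mem_Ioo ⟨by linarith [Real.pi_pos, hθt.1], hθt.2⟩
    have h' : θt * Real.cos θt = 2 * α * Real.sin θt := by
      rw [Real.tan_eq_sin_div_cos] at hθteq
      field_simp at hθteq ⊢
      linarith
    simp only [hF]
    linarith
  intro θ hθ
  have ht0 : 0 < θt := hθt.1
  have ha : (0:ℝ) ≤ 1 - θ/θt := by
    rw [sub_nonneg]; exact div_le_one_of_le₀ hθ.2 ht0.le
  have hb : (0:ℝ) ≤ θ/θt := div_nonneg hθ.1 ht0.le
  have hab : (1 - θ/θt) + θ/θt = 1 := by ring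
  have key := hconc.2 (left_mem_Icc.2 ht0.le) (right_mem_Icc.2 ht0.le) ha hb hab
  simp only [smul_eq_mul, hF0, hFt, mul_zero, add_zero, zero_add] at key
  have harg : θ/θt * θt = θ := div_mul_cancel₀ θ ht0.ne'
  rw [harg] at key
  simpa [hF, sub_nonneg] using key

lemma monoPos {α θt : ℝ} (hα : α ∈ Ioo (0:ℝ) (1/2)) (hθt : θt ∈ Ioo (0:ℝ) (Real.pi/2))
    (hθteq : θt = 2 * α * Real.tan θt) :
    ∀ a b : ℝ, 0 ≤ a → a ≤ b → b < θt → hker α a ≤ hker α b := by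
  have hπ := Real.pi_pos
  have hθπ : θt < Real.pi := by linarith [hθt.2]
  set g : ℝ → ℝ := fun θ => Real.sin θ * θ ^ (-(2 * α)) with hg
  have hderiv : ∀ x : ℝ, 0 < x → HasDerivAt g
      (Real.cos x * x ^ (-(2 * α)) + Real.sin x * (-(2 * α) * x ^ (-(2 * α) - 1))) x := by
    intro x hx
    exact (Real.hasDerivAt_sin x).mul (Real.hasDerivAt_rpow_const (Or.inl hx.ne'))
  have hmono : MonotoneOn g (Ioo (0:ℝ) θt) := by
    apply monotoneOn_of_deriv_nonneg (convex_Ioo _ _)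
    · intro x hx
      exact ((hderiv x hx.1).differentiableAt).continuousAt.continuousWithinAt
    · rw [interior_Ioo]
      intro x hx
      exact ((hderiv x hx.1).differentiableAt).differentiableWithinAt
    · rw [interior_Ioo]
      intro x hx
      rw [(hderiv x hx.1).deriv]
      have hxpos : 0 < x := hx.1
      have hkey := stepA hα hθt hθteq x ⟨hxpos.le, hx.2.le⟩
      have hsplit : x ^ (-(2 * α)) = x * x ^ (-(2 * α) - 1) := by
        have h := Real.rpow_add hxpos 1 (-(2*α)-1)
        rw [Real.rpow_one] at h
        rw [← h]; congr 1; ring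
      have hq : (0:ℝ) ≤ x ^ (-(2 * α) - 1) := Real.rpow_nonneg hxpos.le _
      rw [hsplit]
      nlinarith
  intro a b ha hab hbt
  rcases eq_or_lt_of_le ha with rfl | ha'
  · rcases eq_or_lt_of_le hab with rfl | hb'
    · exact le_refl _
    · rw [hker_zero, hker_eq α (by rw [abs_of_pos hb']; linarith)]
      have hs : 0 ≤ Real.sin b := Real.sin_nonneg_of_nonneg_of_le_pi hb'.le (by linarith)
      positivity
  · have hbt' : a < θt := lt_of_le_of_lt hab hbt
    have hga : hker α a = g a := by
      rw [hker_eq α (by rw [abs_of_pos ha']; linarith), abs_of_pos ha']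
      simp [hg, Real.rpow_neg ha'.le, div_eq_mul_inv]
    have hgb : hker α b = g b := by
      have hb' : 0 < b := lt_of_lt_of_le ha' hab
      rw [hker_eq α (by rw [abs_of_pos hb']; linarith), abs_of_pos hb']
      simp [hg, Real.rpow_neg hb'.le, div_eq_mul_inv]
    rw [hga, hgb]
    exact hmono ⟨ha', hbt'⟩ ⟨lt_of_lt_of_le ha' hab, hbt⟩ hab

lemma hker_neg {θ : ℝ} (α : ℝ) (h : |θ| < Real.pi) : hker α (-θ) = -hker α θ := by
  have h' : |(-θ)| < Real.pi := by rwa [abs_neg]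
  rw [hker_eq α h', hker_eq α h, Real.sin_neg, abs_neg, neg_div]

lemma monoHker {α θt : ℝ} (hα : α ∈ Ioo (0:ℝ) (1/2)) (hθt : θt ∈ Ioo (0:ℝ) (Real.pi/2))
    (hθteq : θt = 2 * α * Real.tan θt) :
    ∀ x y : ℝ, |x| < θt → |y| < θt → x ≤ y → hker α x ≤ hker α y := by
  have hπ := Real.pi_pos
  have hθπ : θt < Real.pi := by linarith [hθt.2]
  intro x y hx hy hxy
  have hx' := abs_lt.1 hx
  have hy' := abs_lt.1 hy
  rcases le_or_gt 0 x with hx0 | hx0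
  · exact monoPos hα hθt hθteq x y hx0 hxy hy'.2
  · rcases le_or_gt 0 y with hy0 | hy0
    · have h1 : hker α x ≤ 0 := by
        have : hker α (-x) ≥ 0 := by
          have := monoPos hα hθt hθteq 0 (-x) le_rfl (by linarith) (by linarith)
          rwa [hker_zero] at this
        have hnn := hker_neg α (show |x| < Real.pi by linarith)
        linarith
      have h2 : 0 ≤ hker α y := by
        have := monoPos hα hθt hθteq 0 y le_rfl hy0 hy'.2
        rwa [hker_zero] at this
      linarith
    · have key := monoPos hα hθt hθteq (-y) (-x) (by linarith) (by linarith) (by linarith)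
      have e1 := hker_neg α (show |x| < Real.pi by linarith)
      have e2 := hker_neg α (show |y| < Real.pi by linarith)
      linarith

/-- for `α ∈ (0, 1/2)`, an equilibrium of the singular weighted Kuramoto system
confined within `θ̃` and with strictly ordered natural frequencies has pairwise distinct,
strictly ordered phases. -/
theorem statement16 (N : ℕ) (K α : ℝ) (hK : 0 < K) (hα : α ∈ Ioo (0 : ℝ) (1 / 2))
    (Ω : Fin N → ℝ) (hΩ : ∀ i j : Fin N, i < j → Ω i < Ω j)
    (θt : ℝ) (hθt : θt ∈ Ioo (0 : ℝ) (Real.pi / 2)) (hθteq : θt = 2 * α * Real.tan θt)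
    (Θb : EuclideanSpace ℝ (Fin N))
    (heq : ∀ i, Ω i + (K / (N : ℝ)) * ∑ j ∈ Finset.univ \ {i}, hker α (Θb j - Θb i) = 0)
    (hclose : ∀ i j : Fin N, |Θb i - Θb j| < θt) :
    ∀ i j : Fin N, i < j → Θb i < Θb j := by
  intro i j hij
  by_contra hlt
  push_neg at hlt
  have hN : (0:ℝ) < (N:ℝ) := by exact_mod_cast i.pos
  have hc : 0 < K / (N:ℝ) := div_pos hK hN
  have hfull : ∀ m : Fin N, ∑ k ∈ Finset.univ \ {m}, hker α (Θb k - Θb m)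
      = ∑ k : Fin N, hker α (Θb k - Θb m) := by
    intro m
    apply Finset.sum_subset (Finset.sdiff_subset)
    intro x _ hx
    have : x = m := by simpa using hx
    rw [this, sub_self, hker_zero]
  have hle : ∑ k : Fin N, hker α (Θb k - Θb i) ≤ ∑ k : Fin N, hker α (Θb k - Θb j) := by
    apply Finset.sum_le_sum
    intro k _
    exact monoHker hα hθt hθteq _ _ (hclose k i) (hclose k j)
      (by linarith [sub_le_sub_left hlt (Θb k)])
  have h1 := heq i
  have h2 := heq j
  rw [hfull i] at h1
  rw [hfull j] at h2
  have hΩij := hΩ i j hij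
  nlinarith [mul_le_mul_of_nonneg_left hle hc.le]
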